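/- Let q be a prime power, s(x) = x^q + x (the trace map of F_{q^2} onto F_q), and let g(x) = x^m + Σ_{i=2}^{m-1} a_i x^i with all a_i ∈ F_q and m ≥ 2. Let L be a rank 2 linearized polynomial of F_{q^2} that maps the kernel of s into F_q. Then f(x) = g(s(x)) + L(x) is a bijection of F_{q^2}. -/

import Mathlib

/-!
Write `σ x = x ^ q`, an involutive automorphism of `F` with fixed field `F_q`. If `f x = f y`,
then `u = x - y` satisfies `L u = g (s y) - g (s x) ∈ F_q`. Applying `L (ker s) ⊆ F_q` to a nonzero
`w` with `σ w = -w` gives `σ α + α = σ β + β`, and with it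
`σ (L u) - L u = (σ β - α) (σ u + u)`, where `σ β ≠ α` by the rank condition. Hence `s u = 0`,
so `s x = s y`, so `L x = L y`, and `x = y` because `L` is injective.
-/

open Function Polynomial

section Involution

variable {F : Type*} [Field F] (σ : F →+* F)

theorem linearized_injective (hσ : ∀ x, σ (σ x) = x) {α β : F} (hrank : σ α * α ≠ σ β * β) :
    Injective fun x => α * σ x + β * x := by
  intro x y hxy
  have hu : α * σ (x - y) + β * (x - y) = 0 := by
    simp only at hxy
    rw [map_sub]
    linear_combination hxy
  have hσu : σ α * (x - y) + σ β * σ (x - y) = 0 := by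
    simpa only [map_add, map_mul, hσ, map_zero, add_comm] using congrArg σ hu
  have : (σ β * β - σ α * α) * (x - y) = 0 := by
    linear_combination σ β * hu - α * hσu
  rcases mul_eq_zero.mp this with h | h
  · exact absurd (sub_eq_zero.mp h).symm hrank
  · exact sub_eq_zero.mp h

theorem exists_ne_zero_apply_eq_neg (hσ : ∀ x, σ (σ x) = x) (hne : ∃ x, σ x ≠ x) :
    ∃ w ≠ 0, σ w = -w := by
  obtain ⟨x, hx⟩ := hne
  exact ⟨σ x - x, sub_ne_zero.mpr hx, by rw [map_sub, hσ]; ring⟩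

theorem apply_add_self_eq_of_fixed_of_apply_eq_neg {α β w : F} (hw0 : w ≠ 0) (hw : σ w = -w)
    (hLw : σ (α * σ w + β * w) = α * σ w + β * w) : σ α + α = σ β + β := by
  rw [map_add, map_mul, map_mul, hw, map_neg, hw] at hLw
  have : (σ α + α - (σ β + β)) * w = 0 := by linear_combination hLw
  exact sub_eq_zero.mp ((mul_eq_zero.mp this).resolve_right hw0)

theorem apply_add_self_eq_zero_of_fixed (hσ : ∀ x, σ (σ x) = x) {α β u : F}
    (htr : σ α + α = σ β + β) (hβα : σ β ≠ α) (hu : σ (α * σ u + β * u) = α * σ u + β * u) :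
    σ u + u = 0 := by
  rw [map_add, map_mul, map_mul, hσ] at hu
  have : (σ β - α) * (σ u + u) = 0 := by linear_combination hu - u * htr
  exact (mul_eq_zero.mp this).resolve_left (sub_ne_zero.mpr hβα)

theorem injective_comp_trace_add_linearized (hσ : ∀ x, σ (σ x) = x) (hne : ∃ x, σ x ≠ x)
    {α β : F} (hrank : σ α * α ≠ σ β * β)
    (hker : ∀ u, σ u + u = 0 → σ (α * σ u + β * u) = α * σ u + β * u)
    (g : F → F) (hg : ∀ z, σ z = z → σ (g z) = g z) :
    Injective fun x => g (σ x + x) + (α * σ x + β * x) := by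
  intro x y hxy
  simp only at hxy
  have htrace_fixed : ∀ z, σ (σ z + z) = σ z + z := fun z => by rw [map_add, hσ, add_comm]
  have hLu : α * σ (x - y) + β * (x - y) = g (σ y + y) - g (σ x + x) := by
    rw [map_sub]; linear_combination hxy
  have hLu_fixed : σ (α * σ (x - y) + β * (x - y)) = α * σ (x - y) + β * (x - y) := by
    rw [hLu, map_sub, hg _ (htrace_fixed x), hg _ (htrace_fixed y)]
  obtain ⟨w, hw0, hw⟩ := exists_ne_zero_apply_eq_neg σ hσ hne
  have htr := apply_add_self_eq_of_fixed_of_apply_eq_neg σ hw0 hw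
    (hker w (by rw [hw, neg_add_cancel]))
  have hβα : σ β ≠ α := fun h => hrank (by rw [← h, hσ, mul_comm])
  have hs : σ (x - y) + (x - y) = 0 := apply_add_self_eq_zero_of_fixed σ hσ htr hβα hLu_fixed
  have hsxy : σ x + x = σ y + y := by rw [map_sub] at hs; linear_combination hs
  rw [hsxy, add_right_inj] at hxy
  exact linearized_injective σ hσ hrank hxy

end Involution

theorem FiniteField.exists_pow_ne_self {K : Type*} [Field K] [Fintype K] {q : ℕ} (h1 : 1 < q)
    (hq : q < Fintype.card K) : ∃ x : K, x ^ q ≠ x := by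
  by_contra! h
  have hroots : (Finset.univ : Finset K).val ⊆ (X ^ q - X : K[X]).roots := fun x _ => by
    rw [mem_roots (FiniteField.X_pow_card_sub_X_ne_zero K h1)]
    simp [h x]
  have := card_le_degree_of_subset_roots hroots
  rw [Finset.card_univ, FiniteField.X_pow_card_sub_X_natDegree_eq K h1] at this
  omega

theorem stmt_13_general (q : ℕ) (hq : IsPrimePow q)
    (F : Type) [Field F] [Fintype F] (hF : Fintype.card F = q ^ 2)
    (m : ℕ)
    (a : ℕ → F) (ha : ∀ i, (a i) ^ q = a i)
    (α β : F) (hrank2 : β ^ (q + 1) ≠ α ^ (q + 1))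
    (L : F → F) (hL : L = fun x : F => α * x ^ q + β * x)
    (hker : ∀ u : F, u ^ q + u = 0 → (L u) ^ q = L u) :
    Function.Bijective (fun x : F =>
      (x ^ q + x) ^ m + (∑ i ∈ Finset.Ico 2 m, a i * (x ^ q + x) ^ i) + L x) := by
  obtain ⟨p, k, hp, hk, rfl⟩ := hq
  rw [← Nat.prime_iff] at hp
  have : Fact p.Prime := ⟨hp⟩
  have : CharP F p := charP_of_card_eq_prime_pow (f := 2 * k) (by rw [hF, pow_mul'])
  set σ := iterateFrobenius F p k
  have hσ : ∀ x, σ x = x ^ p ^ k := fun _ => iterateFrobenius_def ..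
  have hσσ : ∀ x, σ (σ x) = x := fun x => by
    rw [hσ, hσ, ← pow_mul, ← sq, ← hF, FiniteField.pow_card]
  have hq1 : 1 < p ^ k := Nat.one_lt_pow hk.ne' hp.one_lt
  obtain ⟨x, hx⟩ := FiniteField.exists_pow_ne_self (K := F) hq1
    (by rw [hF]; exact lt_self_pow₀ hq1 one_lt_two)
  subst hL
  have hinj := injective_comp_trace_add_linearized σ hσσ ⟨x, by rwa [hσ]⟩
    (by simpa only [hσ, ← pow_succ', mul_comm] using hrank2.symm)
    (by simpa only [hσ] using hker)
    (fun z => z ^ m + ∑ i ∈ Finset.Ico 2 m, a i * z ^ i)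
    (fun z hz => by
      simp only [map_add, map_pow, map_sum, map_mul, hz]
      simp only [hσ, ha])
  rw [Fintype.bijective_iff_injective_and_card]
  exact ⟨by simpa only [hσ] using hinj, rfl⟩

/-- Let `s(x) = x^q + x` (the trace of `F_{q^2}` onto `F_q`) and
`g(x) = x^m + Σ_{i=2}^{m-1} a_i x^i` with all `a_i ∈ F_q` and `m ≥ 2`. Let
`L(x) = αx^q + βx` be a rank 2 linearized polynomial mapping `ker s` into `F_q`.
Then `f(x) = g(s(x)) + L(x)` is a bijection of `F_{q^2}`. -/
theorem stmt_13 (q : ℕ) (hq : IsPrimePow q)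
    (F : Type) [Field F] [Fintype F] (hF : Fintype.card F = q ^ 2)
    (m : ℕ) (hm : 2 ≤ m)
    (a : ℕ → F) (ha : ∀ i, (a i) ^ q = a i)
    (α β : F) (hrank2 : β ^ (q + 1) ≠ α ^ (q + 1))
    (L : F → F) (hL : L = fun x : F => α * x ^ q + β * x)
    (hker : ∀ u : F, u ^ q + u = 0 → (L u) ^ q = L u) :
    Function.Bijective (fun x : F =>
      (x ^ q + x) ^ m + (∑ i ∈ Finset.Ico 2 m, a i * (x ^ q + x) ^ i) + L x) :=
  stmt_13_general q hq F hF m a ha α β hrank2 L hL hker
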